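/- Two nonzero elements of 𝒫_λ(θ,S) satisfy (s, a₁^{-1}a₂) 𝒟 (t, b₁^{-1}b₂) in Green's 𝒟-relation (𝒟 = ℒ∘ℛ) if and only if s 𝒟 t in S. -/

import Mathlib

open scoped Classical

inductive PBR (Λ S : Type*) : Type _ where
  | zero : PBR Λ S
  | elt : S → List Λ → List Λ → PBR Λ S

namespace PBR

/-- Multiplication on the λ-polycyclic Bruck–Reilly extension `𝒫_λ(θ,S)`. -/
noncomputable def mul {Λ S : Type*} [Monoid S] (θ : S →* S) :
    PBR Λ S → PBR Λ S → PBR Λ S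
  | zero, _ => zero
  | elt _ _ _, zero => zero
  | elt s a₁ a₂, elt t b₁ b₂ =>
    if h : ∃ u : List Λ, b₁ = u ++ a₂ then
      elt ((⇑θ)^[h.choose.length] s * t) (h.choose ++ a₁) b₂
    else if h' : ∃ v : List Λ, a₂ = v ++ b₁ then
      elt (s * (⇑θ)^[h'.choose.length] t) a₁ (h'.choose ++ b₂)
    else zero

end PBR

section Aux

variable {Λ S : Type*} [Monoid S] (θ : S →* S)

lemma pbr_nil_of_self_eq_append {a v : List Λ} (h : a = v ++ a) : v = [] := by
  have h2 := congrArg List.length h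
  simp only [List.length_append] at h2
  have h3 : v.length = 0 := by omega
  simpa using h3

lemma pbr_mul_zero (p : PBR Λ S) : PBR.mul θ p PBR.zero = PBR.zero := by
  cases p <;> rfl

lemma pbr_mul_elt (x y : S) (c a d : List Λ) :
    PBR.mul θ (PBR.elt x c a) (PBR.elt y a d) = PBR.elt (x * y) c d := by
  have h : ∃ u : List Λ, a = u ++ a := ⟨[], rfl⟩
  have hc : h.choose = [] := pbr_nil_of_self_eq_append h.choose_spec
  simp only [PBR.mul]
  rw [dif_pos h, hc]
  simp

lemma pbr_mul_cases {x y r : S} {x₁ x₂ y₁ y₂ c d : List Λ}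
    (h : PBR.mul θ (PBR.elt x x₁ x₂) (PBR.elt y y₁ y₂) = PBR.elt r c d) :
    (∃ u : List Λ, y₁ = u ++ x₂ ∧ r = (⇑θ)^[u.length] x * y ∧ c = u ++ x₁ ∧ d = y₂) ∨
    (∃ v : List Λ, x₂ = v ++ y₁ ∧ r = x * (⇑θ)^[v.length] y ∧ c = x₁ ∧ d = v ++ y₂) := by
  simp only [PBR.mul] at h
  by_cases h1 : ∃ u : List Λ, y₁ = u ++ x₂
  · rw [dif_pos h1] at h
    obtain ⟨hr, hc, hd⟩ := PBR.elt.inj h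
    exact Or.inl ⟨h1.choose, h1.choose_spec, hr.symm, hc.symm, hd.symm⟩
  · rw [dif_neg h1] at h
    by_cases h2 : ∃ v : List Λ, x₂ = v ++ y₁
    · rw [dif_pos h2] at h
      obtain ⟨hr, hc, hd⟩ := PBR.elt.inj h
      exact Or.inr ⟨h2.choose, h2.choose_spec, hr.symm, hc.symm, hd.symm⟩
    · rw [dif_neg h2] at h
      exact absurd h (by simp)

end Aux

/-- Green's `𝒟`-relation on `𝒫_λ(θ,S)` for nonzero elements:
`(s,a₁⁻¹a₂) 𝒟 (t,b₁⁻¹b₂)` iff `s 𝒟 t` in `S`. -/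
theorem pbr_green_D_iff {Λ S : Type*} [Monoid S] (θ : S →* S)
    (hθ : ∀ s : S, IsUnit (θ s)) (s t : S) (a₁ a₂ b₁ b₂ : List Λ) :
    (∃ z : PBR Λ S,
        ((∃ p : PBR Λ S, PBR.elt s a₁ a₂ = PBR.mul θ p z) ∧
          (∃ q : PBR Λ S, z = PBR.mul θ q (PBR.elt s a₁ a₂))) ∧
        ((∃ p : PBR Λ S, z = PBR.mul θ (PBR.elt t b₁ b₂) p) ∧
          (∃ q : PBR Λ S, PBR.elt t b₁ b₂ = PBR.mul θ z q))) ↔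
      (∃ r : S,
        ((∃ p : S, s = p * r) ∧ (∃ q : S, r = q * s)) ∧
        ((∃ p : S, r = t * p) ∧ (∃ q : S, t = r * q))) := by
  constructor
  · rintro ⟨z, ⟨⟨p, hp⟩, ⟨q, hq⟩⟩, ⟨⟨p', hp'⟩, ⟨q', hq'⟩⟩⟩
    -- z must be nonzero
    cases z with
    | zero => rw [pbr_mul_zero] at hp; cases hp
    | elt r c d =>
      cases p with
      | zero => cases hp
      | elt p₀ p₁ p₂ =>
        cases q with
        | zero => cases hq
        | elt q₀ q₁ q₂ =>
          cases p' with
          | zero => rw [pbr_mul_zero] at hp'; cases hp'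
          | elt p₀' p₁' p₂' =>
            cases q' with
            | zero => rw [pbr_mul_zero] at hq'; cases hq'
            | elt q₀' q₁' q₂' =>
              refine ⟨r, ?_, ?_⟩
              · -- s ℒ r
                rcases pbr_mul_cases θ hp.symm with
                  ⟨u, hu, hs, ha1, ha2⟩ | ⟨v, hv, hs, ha1, ha2⟩ <;>
                rcases pbr_mul_cases θ hq.symm with
                  ⟨u', hu', hr, hc, hd⟩ | ⟨v', hv', hr, hc, hd⟩
                · exact ⟨⟨_, hs⟩, ⟨_, hr⟩⟩
                · subst ha2
                  have hv'nil : v' = [] := pbr_nil_of_self_eq_append hd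
                  subst hv'nil
                  exact ⟨⟨_, hs⟩, ⟨q₀, by simpa using hr⟩⟩
                · subst hd
                  have hvnil : v = [] := pbr_nil_of_self_eq_append ha2
                  subst hvnil
                  exact ⟨⟨p₀, by simpa using hs⟩, ⟨_, hr⟩⟩
                · have hnil : v ++ v' = [] := by
                    apply pbr_nil_of_self_eq_append (a := a₂)
                    rw [List.append_assoc, ← hd, ← ha2]
                  obtain ⟨hv0, hv'0⟩ := List.append_eq_nil_iff.mp hnil
                  subst hv0; subst hv'0
                  exact ⟨⟨p₀, by simpa using hs⟩, ⟨q₀, by simpa using hr⟩⟩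
              · -- r ℛ t
                rcases pbr_mul_cases θ hp'.symm with
                  ⟨u, hu, hr, hc, hd⟩ | ⟨v, hv, hr, hc, hd⟩ <;>
                rcases pbr_mul_cases θ hq'.symm with
                  ⟨u', hu', ht, hb1, hb2⟩ | ⟨v', hv', ht, hb1, hb2⟩
                · have hnil : u ++ u' = [] := by
                    apply pbr_nil_of_self_eq_append (a := c)
                    rw [List.append_assoc, ← hb1, ← hc]
                  obtain ⟨hu0, hu'0⟩ := List.append_eq_nil_iff.mp hnil
                  subst hu0; subst hu'0
                  exact ⟨⟨p₀', by simpa using hr⟩, ⟨q₀', by simpa using ht⟩⟩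
                · subst hb1
                  have hunil : u = [] := pbr_nil_of_self_eq_append hc
                  subst hunil
                  exact ⟨⟨p₀', by simpa using hr⟩, ⟨_, ht⟩⟩
                · subst hc
                  have hu'nil : u' = [] := pbr_nil_of_self_eq_append hb1
                  subst hu'nil
                  exact ⟨⟨_, hr⟩, ⟨q₀', by simpa using ht⟩⟩
                · exact ⟨⟨_, hr⟩, ⟨_, ht⟩⟩
  · rintro ⟨r, ⟨⟨p, hp⟩, ⟨q, hq⟩⟩, ⟨⟨p', hp'⟩, ⟨q', hq'⟩⟩⟩
    refine ⟨PBR.elt r b₁ a₂,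
      ⟨⟨PBR.elt p a₁ b₁, ?_⟩, ⟨PBR.elt q b₁ a₁, ?_⟩⟩,
      ⟨⟨PBR.elt p' b₂ a₂, ?_⟩, ⟨PBR.elt q' a₂ b₂, ?_⟩⟩⟩
    · rw [pbr_mul_elt, hp]
    · rw [pbr_mul_elt, hq]
    · rw [pbr_mul_elt, hp']
    · rw [pbr_mul_elt, hq']
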